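/- arXiv:1802.01226 — 2 statements merged into one kernel-verified Lean document; each statement's English description precedes it below -/
import Mathlib

section
/- Soundness of the vectorial Darboux rule (vdbx): Let f be a polynomial vector field on ℝⁿ, let Q ⊆ ℝⁿ, let m ≥ 1, let p₁,…,p_m be polynomials and let G be an m×m matrix of polynomials such that L_f(pᵢ)(x) = Σ_{j=1}^m G_{ij}(x)·p_j(x) for every x ∈ Q and every i. If φ : [0,T] → ℝⁿ is a solution of x' = f(x) with φ(t) ∈ Q for all t ∈ [0,T] and pᵢ(φ(0)) = 0 for every i, then pᵢ(φ(t)) = 0 for every i and every t ∈ [0,T]. -/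
/-!
Along a solution `φ` the vector `y t = (pᵢ (φ t))ᵢ` satisfies `y' = A(t) y` with
`A(t) = (G_{ij}(φ t))`, by the chain rule for the Lie derivative and the Darboux hypothesis on `Q`.
The entries of `A` are bounded on the compact trajectory, so `‖y'‖ ≤ K ‖y‖`, and Grönwall's
inequality with `y 0 = 0` forces `y = 0` on `[0, T]`.
-/

open MvPolynomial Set

/-- Lie derivative of polynomial `p` along the polynomial vector field `f`. -/
noncomputable def lieD {n : ℕ} (f : Fin n → MvPolynomial (Fin n) ℝ)
    (p : MvPolynomial (Fin n) ℝ) : MvPolynomial (Fin n) ℝ :=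
  ∑ i, pderiv i p * f i

/-- `φ` is a solution of `x' = f(x)` on `[0,T]`. -/
def IsSol {n : ℕ} (f : Fin n → MvPolynomial (Fin n) ℝ) (T : ℝ)
    (φ : ℝ → (Fin n → ℝ)) : Prop :=
  ∀ t ∈ Icc (0 : ℝ) T, HasDerivWithinAt φ (fun i => eval (φ t) (f i)) (Icc (0 : ℝ) T) t

section LieDerivative

variable {n : ℕ} (f : Fin n → MvPolynomial (Fin n) ℝ)

@[simp]
lemma lieD_C (a : ℝ) : lieD f (C a) = 0 := by
  simp [lieD]

@[simp]
lemma lieD_X (i : Fin n) : lieD f (X i) = f i := by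
  simp [lieD, pderiv_X, Pi.single_apply]

lemma lieD_add (p q : MvPolynomial (Fin n) ℝ) : lieD f (p + q) = lieD f p + lieD f q := by
  simp [lieD, add_mul, Finset.sum_add_distrib]

lemma lieD_mul (p q : MvPolynomial (Fin n) ℝ) :
    lieD f (p * q) = lieD f p * q + p * lieD f q := by
  simp only [lieD, pderiv_mul, add_mul, Finset.sum_add_distrib, Finset.sum_mul, Finset.mul_sum]
  congr 1 <;> refine Finset.sum_congr rfl fun i _ => by ring

end LieDerivative

lemma HasDerivWithinAt.eval_lieD {n : ℕ} {f : Fin n → MvPolynomial (Fin n) ℝ}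
    {φ : ℝ → Fin n → ℝ} {s : Set ℝ} {t : ℝ}
    (hφ : HasDerivWithinAt φ (fun i => eval (φ t) (f i)) s t) (p : MvPolynomial (Fin n) ℝ) :
    HasDerivWithinAt (fun τ => eval (φ τ) p) (eval (φ t) (lieD f p)) s t := by
  induction p using MvPolynomial.induction_on with
  | C a => simpa using hasDerivWithinAt_const t s a
  | add p q hp hq => simpa [lieD_add] using hp.fun_add hq
  | mul_X p i hp =>
    have hφi : HasDerivWithinAt (fun τ => φ τ i) (eval (φ t) (f i)) s t :=
      hasDerivWithinAt_pi.1 hφ i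
    simpa [lieD_mul] using hp.fun_mul hφi

namespace IsSol

variable {n : ℕ} {f : Fin n → MvPolynomial (Fin n) ℝ} {T : ℝ} {φ : ℝ → Fin n → ℝ}

lemma continuousOn (hφ : IsSol f T φ) : ContinuousOn φ (Icc 0 T) :=
  fun t ht => (hφ t ht).continuousWithinAt

lemma hasDerivWithinAt_eval_Ici (hφ : IsSol f T φ) (p : MvPolynomial (Fin n) ℝ) {t : ℝ}
    (ht : t ∈ Ico 0 T) :
    HasDerivWithinAt (fun τ => eval (φ τ) p) (eval (φ t) (lieD f p)) (Ici t) t :=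
  ((hφ t (Ico_subset_Icc_self ht)).mono_of_mem_nhdsWithin
    (Icc_mem_nhdsGE_of_mem ht)).eval_lieD p

end IsSol

lemma IsCompact.exists_forall_abs_eval_le {σ ι : Type*} [Finite ι] {K : Set (σ → ℝ)}
    (hK : IsCompact K) (q : ι → MvPolynomial σ ℝ) :
    ∃ C ≥ 0, ∀ x ∈ K, ∀ i, |eval x (q i)| ≤ C := by
  have : Fintype ι := Fintype.ofFinite ι
  obtain ⟨C, hC⟩ := hK.exists_bound_of_continuousOn
    (continuous_pi fun i => continuous_eval (q i)).continuousOn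
  exact ⟨max C 0, le_max_right _ _, fun x hx i =>
    ((norm_le_pi_norm (fun i => eval x (q i)) i).trans (hC x hx)).trans (le_max_left _ _)⟩

lemma norm_sum_mul_le {ι : Type*} [Fintype ι] {a : ι → ι → ℝ} {C : ℝ} (hC : 0 ≤ C)
    (ha : ∀ i j, |a i j| ≤ C) (v : ι → ℝ) :
    ‖fun i => ∑ j, a i j * v j‖ ≤ Fintype.card ι * C * ‖v‖ := by
  refine (pi_norm_le_iff_of_nonneg (by positivity)).2 fun i => ?_
  calc ‖∑ j, a i j * v j‖ ≤ ∑ j, ‖a i j * v j‖ := norm_sum_le _ _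
    _ ≤ ∑ _j : ι, C * ‖v‖ := Finset.sum_le_sum fun j _ => by
      rw [norm_mul, Real.norm_eq_abs]
      exact mul_le_mul (ha i j) (norm_le_pi_norm v j) (norm_nonneg _) hC
    _ = Fintype.card ι * C * ‖v‖ := by simp [mul_assoc]

theorem vdbx_sound_general {n : ℕ} (f : Fin n → MvPolynomial (Fin n) ℝ)
    (Q : Set (Fin n → ℝ)) (m : ℕ)
    (p : Fin m → MvPolynomial (Fin n) ℝ) (G : Fin m → Fin m → MvPolynomial (Fin n) ℝ)
    (hdbx : ∀ x ∈ Q, ∀ i, eval x (lieD f (p i)) = ∑ j, eval x (G i j) * eval x (p j))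
    (T : ℝ) (φ : ℝ → (Fin n → ℝ))
    (hsol : IsSol f T φ) (hQ : ∀ t ∈ Icc (0 : ℝ) T, φ t ∈ Q)
    (h0 : ∀ i, eval (φ 0) (p i) = 0) :
    ∀ i, ∀ t ∈ Icc (0 : ℝ) T, eval (φ t) (p i) = 0 := by
  obtain ⟨C, hC0, hC⟩ := IsCompact.exists_forall_abs_eval_le
    (isCompact_Icc.image_of_continuousOn hsol.continuousOn) fun ij : Fin m × Fin m => G ij.1 ij.2
  have hy : ContinuousOn (fun t i => eval (φ t) (p i)) (Icc 0 T) :=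
    continuousOn_pi.2 fun i => (continuous_eval (p i)).comp_continuousOn hsol.continuousOn
  have hy' (t : ℝ) (ht : t ∈ Ico 0 T) : HasDerivWithinAt (fun t i => eval (φ t) (p i))
      (fun i => eval (φ t) (lieD f (p i))) (Ici t) t :=
    hasDerivWithinAt_pi.2 fun i => hsol.hasDerivWithinAt_eval_Ici (p i) ht
  have hbound (t : ℝ) (ht : t ∈ Ico 0 T) : ‖fun i => eval (φ t) (lieD f (p i))‖ ≤
      (m * C) * ‖fun i => eval (φ t) (p i)‖ := by
    have htT := Ico_subset_Icc_self ht
    simp_rw [hdbx _ (hQ t htT)]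
    simpa using norm_sum_mul_le hC0 (fun i j => hC _ (mem_image_of_mem φ htT) (i, j)) _
  intro i t ht
  exact congrFun (eq_zero_of_abs_deriv_le_mul_abs_self_of_eq_zero_right hy hy' (funext h0)
    hbound t ht) i

/-- Soundness of the vectorial Darboux rule (vdbx). -/
theorem vdbx_sound {n : ℕ} (hn : 1 ≤ n) (f : Fin n → MvPolynomial (Fin n) ℝ)
    (Q : Set (Fin n → ℝ)) (m : ℕ) (hm : 1 ≤ m)
    (p : Fin m → MvPolynomial (Fin n) ℝ) (G : Fin m → Fin m → MvPolynomial (Fin n) ℝ)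
    (hdbx : ∀ x ∈ Q, ∀ i, eval x (lieD f (p i)) = ∑ j, eval x (G i j) * eval x (p j))
    (T : ℝ) (hT : 0 ≤ T) (φ : ℝ → (Fin n → ℝ))
    (hsol : IsSol f T φ) (hQ : ∀ t ∈ Icc (0 : ℝ) T, φ t ∈ Q)
    (h0 : ∀ i, eval (φ 0) (p i) = 0) :
    ∀ i, ∀ t ∈ Icc (0 : ℝ) T, eval (φ t) (p i) = 0 :=
  vdbx_sound_general f Q m p G hdbx T φ hsol hQ h0
end

section
/- Soundness of the real induction axiom for ODEs (RI): Let f be a polynomial vector field on ℝⁿ whose induced map F never vanishes (F(x) ≠ 0 for all x ∈ ℝⁿ, as is ensured e.g. by a clock equation x₁' = 1), and let P ⊆ ℝⁿ. For every ω ∈ ℝⁿ the following are equivalent: (a) for every T ≥ 0, every solution φ : [0,T] → ℝⁿ of x' = f(x) with φ(0) = ω satisfies φ(t) ∈ P for all t ∈ [0,T]; (b) for every T ≥ 0 and every solution φ : [0,T] → ℝⁿ of x' = f(x) with φ(0) = ω such that φ(t) ∈ P ∪ {φ(T)} for all t ∈ [0,T], one has both φ(T) ∈ P and there exist S > 0 and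 a solution ψ : [0,S] → ℝⁿ of x' = f(x) with ψ(0) = φ(T), ψ(s) ∈ P for all s ∈ [0,S], and ψ(S) ≠ φ(T). -/
/-! (a) ⇒ (b): gluing a solution from `ω` to `φ T` with a local solution `ψ` from `φ T`
(Picard–Lindelöf) gives a solution from `ω`, so `ψ` stays in `P`; it leaves `φ T` because its
initial velocity `F (φ T)` is nonzero.

(b) ⇒ (a) is real induction on the times up to which `φ` stays in `P`: if `φ` is in `P` on
`[0, x)`, the hypothesis at `x` gives `φ x ∈ P` and a solution from `φ x` inside `P`, which by
uniqueness (`F` is `C¹`, hence locally Lipschitz) is `φ (x + ·)`, so `φ` stays in `P` a little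
beyond `x`. -/

open MvPolynomial Set

theorem Icc_subset_of_forall_Ico_subset {α : Type*} [ConditionallyCompleteLinearOrder α]
    {a b : α} {s : Set α}
    (h : ∀ x ∈ Icc a b, Ico a x ⊆ s → x ∈ s ∧ (x < b → ∃ y > x, Ico x y ⊆ s)) :
    Icc a b ⊆ s := by
  intro t ht
  set B := {x | x ∈ Icc a b ∧ Ico a x ⊆ s}
  have haB : a ∈ B := ⟨⟨le_rfl, ht.1.trans ht.2⟩, by simp⟩
  have hB : BddAbove B := ⟨b, fun x hx => hx.1.2⟩
  set c := sSup B
  have hac : a ≤ c := le_csSup hB haB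
  have hcb : c ≤ b := csSup_le ⟨a, haB⟩ fun x hx => hx.1.2
  have hIco : Ico a c ⊆ s := fun u hu => by
    obtain ⟨x, hxB, hux⟩ := exists_lt_of_lt_csSup ⟨a, haB⟩ hu.2
    exact hxB.2 ⟨hu.1, hux⟩
  obtain ⟨hcs, hstep⟩ := h c ⟨hac, hcb⟩ hIco
  have hIcc : Icc a c ⊆ s := Ico_insert_right hac ▸ insert_subset hcs hIco
  rcases hcb.lt_or_eq with hcb | hcb
  · obtain ⟨y, hcy, hy⟩ := hstep hcb
    have hyB : min y b ∈ B := by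
      refine ⟨⟨hac.trans (le_min hcy.le hcb.le), min_le_right _ _⟩, fun u hu => ?_⟩
      rcases lt_or_ge u c with huc | huc
      · exact hIco ⟨hu.1, huc⟩
      · exact hy ⟨huc, hu.2.trans_le (min_le_left _ _)⟩
    exact absurd (le_csSup hB hyB) (not_le.mpr (lt_min hcy hcb))
  · exact hIcc ⟨ht.1, ht.2.trans_eq hcb.symm⟩

section
variable {E : Type*} [NormedAddCommGroup E] [NormedSpace ℝ E]

theorem eqOn_Icc_of_hasDerivWithinAt_of_locallyLipschitz {v : E → E} (hv : LocallyLipschitz v)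
    {a b : ℝ} {φ ψ : ℝ → E}
    (hφ : ∀ t ∈ Icc a b, HasDerivWithinAt φ (v (φ t)) (Icc a b) t)
    (hψ : ∀ t ∈ Icc a b, HasDerivWithinAt ψ (v (ψ t)) (Icc a b) t) (h : φ a = ψ a) :
    EqOn φ ψ (Icc a b) := by
  have hφc : ContinuousOn φ (Icc a b) := fun t ht => (hφ t ht).continuousWithinAt
  have hψc : ContinuousOn ψ (Icc a b) := fun t ht => (hψ t ht).continuousWithinAt
  set K := φ '' Icc a b ∪ ψ '' Icc a b
  obtain ⟨L, hL⟩ := hv.locallyLipschitzOn.exists_lipschitzOnWith_of_compact (s := K)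
    ((isCompact_Icc.image_of_continuousOn hφc).union
      (isCompact_Icc.image_of_continuousOn hψc))
  have hright : ∀ {χ : ℝ → E},
      (∀ t ∈ Icc a b, HasDerivWithinAt χ (v (χ t)) (Icc a b) t) →
      ∀ t ∈ Ico a b, HasDerivWithinAt χ (v (χ t)) (Ici t) t := fun hχ t ht =>
    (hχ t (Ico_subset_Icc_self ht)).mono_of_mem_nhdsWithin (Icc_mem_nhdsGE_of_mem ht)
  exact ODE_solution_unique_of_mem_Icc_right (v := fun _ => v) (s := fun _ => K)
    (fun _ _ => hL) hφc (hright hφ) (fun t ht => .inl ⟨t, Ico_subset_Icc_self ht, rfl⟩)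
    hψc (hright hψ) (fun t ht => .inr ⟨t, Ico_subset_Icc_self ht, rfl⟩) h

theorem exists_ne_of_hasDerivWithinAt_Icc {φ : ℝ → E} {v : E} {a b : ℝ} (hab : a < b)
    (hφ : HasDerivWithinAt φ v (Icc a b) a) (hv : v ≠ 0) :
    ∃ t ∈ Ioc a b, φ t ≠ φ a := by
  by_contra! hconst
  have hφa : EqOn φ (fun _ => φ a) (Icc a b) := fun t ht =>
    ht.1.eq_or_lt.elim (fun hat => hat ▸ rfl) fun hat => hconst t ⟨hat, ht.2⟩
  refine hv ((uniqueDiffOn_Icc hab a (left_mem_Icc.mpr hab.le)).eq_deriv _ hφ ?_)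
  exact (hasDerivWithinAt_const a _ (φ a)).congr hφa rfl
end

theorem contDiff_eval_pi {𝕜 σ ι : Type*} [NontriviallyNormedField 𝕜] [CompleteSpace 𝕜]
    [Fintype σ] [Fintype ι] {k : WithTop ℕ∞} (f : ι → MvPolynomial σ 𝕜) :
    ContDiff 𝕜 k fun x i => eval x (f i) :=
  contDiff_pi.mpr fun i => (AnalyticOnNhd.eval_mvPolynomial (f i)).contDiff

namespace IsSol
variable {n : ℕ} {f : Fin n → MvPolynomial (Fin n) ℝ} {S T : ℝ} {φ ψ : ℝ → Fin n → ℝ}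

theorem mono (hφ : IsSol f T φ) (hST : S ≤ T) : IsSol f S φ := fun t ht =>
  (hφ t ⟨ht.1, ht.2.trans hST⟩).mono (Icc_subset_Icc_right hST)

theorem comp_const_add (hφ : IsSol f T φ) {c : ℝ} (hc : 0 ≤ c) (hcS : c + S ≤ T) :
    IsSol f S fun s => φ (c + s) := fun s hs => by
  have hmaps : MapsTo (c + ·) (Icc 0 S) (Icc 0 T) := fun u hu =>
    ⟨by linarith [hu.1], by linarith [hu.2]⟩
  simpa [Function.comp_def] using (hφ (c + s) (hmaps hs)).scomp s
    ((hasDerivAt_id s).const_add c).hasDerivWithinAt hmaps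

theorem eqOn (hφ : IsSol f T φ) (hψ : IsSol f T ψ) (h : φ 0 = ψ 0) : EqOn φ ψ (Icc 0 T) :=
  eqOn_Icc_of_hasDerivWithinAt_of_locallyLipschitz (contDiff_eval_pi f).locallyLipschitz hφ hψ h

theorem append (hφ : IsSol f T φ) (hψ : IsSol f S ψ) (hT : 0 ≤ T) (hS : 0 ≤ S)
    (h : ψ 0 = φ T) : IsSol f (T + S) fun t => if t ≤ T then φ t else ψ (t - T) := by
  set χ : ℝ → Fin n → ℝ := fun t => if t ≤ T then φ t else ψ (t - T)
  have hχφ : EqOn χ φ (Icc 0 T) := fun t ht => if_pos ht.2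
  have hχψ : EqOn χ (fun t => ψ (t - T)) (Icc T (T + S)) := fun t ht => by
    rcases ht.1.eq_or_lt with rfl | hTt
    · simp [χ, h]
    · simp [χ, not_le.mpr hTt]
  intro t ht
  have hleft : HasDerivWithinAt χ (fun i => eval (χ t) (f i)) (Icc 0 T) t := by
    by_cases htT : t ≤ T
    · exact ((hφ t ⟨ht.1, htT⟩).congr hχφ (hχφ ⟨ht.1, htT⟩)).congr_deriv
        (by rw [hχφ ⟨ht.1, htT⟩])
    · exact HasFDerivWithinAt.of_notMem_closure (by rw [closure_Icc]; exact fun h => htT h.2)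
  have hright : HasDerivWithinAt χ (fun i => eval (χ t) (f i)) (Icc T (T + S)) t := by
    by_cases hTt : T ≤ t
    · have hmaps : MapsTo (· - T) (Icc T (T + S)) (Icc 0 S) := fun u hu =>
        ⟨by linarith [hu.1], by linarith [hu.2]⟩
      have hshift := (hψ (t - T) (hmaps ⟨hTt, ht.2⟩)).scomp t
        ((hasDerivAt_id t).sub_const T).hasDerivWithinAt hmaps
      rw [one_smul] at hshift
      exact (hshift.congr hχψ (hχψ ⟨hTt, ht.2⟩)).congr_deriv (by rw [hχψ ⟨hTt, ht.2⟩])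
    · exact HasFDerivWithinAt.of_notMem_closure (by rw [closure_Icc]; exact fun h => hTt h.1)
  simpa [Icc_union_Icc_eq_Icc hT (le_add_of_nonneg_right hS)] using hleft.union hright

end IsSol

theorem exists_isSol {n : ℕ} (f : Fin n → MvPolynomial (Fin n) ℝ) (x : Fin n → ℝ) :
    ∃ S > 0, ∃ ψ : ℝ → Fin n → ℝ, IsSol f S ψ ∧ ψ 0 = x := by
  obtain ⟨ψ, hψ0, ε, hε, hψ⟩ := (contDiff_eval_pi f).contDiffAt
    |>.exists_forall_mem_closedBall_exists_eq_forall_mem_Ioo_hasDerivAt₀ (x₀ := x) 0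
  refine ⟨ε / 2, half_pos hε, ψ, fun t ht => ?_, hψ0⟩
  exact (hψ t ⟨by linarith [ht.1], by linarith [ht.2]⟩).hasDerivWithinAt

section
variable {n : ℕ} {f : Fin n → MvPolynomial (Fin n) ℝ}

theorem exists_isSol_ne (hF : ∀ x : Fin n → ℝ, (fun i => eval x (f i)) ≠ 0)
    (x : Fin n → ℝ) :
    ∃ S > 0, ∃ ψ : ℝ → Fin n → ℝ, IsSol f S ψ ∧ ψ 0 = x ∧ ψ S ≠ x := by
  obtain ⟨S, hS, ψ, hψ, rfl⟩ := exists_isSol f x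
  obtain ⟨s, hs, hne⟩ :=
    exists_ne_of_hasDerivWithinAt_Icc hS (hψ 0 ⟨le_rfl, hS.le⟩) (hF (ψ 0))
  exact ⟨s, hs.1, ψ, hψ.mono hs.2, rfl, hne⟩

/-- The box modality `[x' = f] P` of differential dynamic logic, evaluated at `ω`. -/
def StaysIn (f : Fin n → MvPolynomial (Fin n) ℝ) (P : Set (Fin n → ℝ)) (ω : Fin n → ℝ) :
    Prop :=
  ∀ T : ℝ, 0 ≤ T → ∀ φ : ℝ → (Fin n → ℝ), IsSol f T φ → φ 0 = ω →
    ∀ t ∈ Icc (0 : ℝ) T, φ t ∈ P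

variable {P : Set (Fin n → ℝ)} {ω : Fin n → ℝ}

theorem StaysIn.of_isSol (h : StaysIn f P ω) {T : ℝ} (hT : 0 ≤ T) {φ : ℝ → Fin n → ℝ}
    (hφ : IsSol f T φ) (hφ0 : φ 0 = ω) : StaysIn f P (φ T) := by
  intro S hS ψ hψ hψ0 s hs
  have hχ := h (T + S) (by linarith) _ (hφ.append hψ hT hS hψ0) (by simp [hT, hφ0])
    (T + s) ⟨by linarith [hs.1], by linarith [hs.2]⟩
  rcases hs.1.eq_or_lt with rfl | hs0
  · simpa [hψ0] using hχ
  · simpa [not_le.mpr (lt_add_of_pos_right T hs0)] using hχ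

theorem staysIn_of_forall_exists_isSol_mem
    (h : ∀ T : ℝ, 0 ≤ T → ∀ φ : ℝ → (Fin n → ℝ), IsSol f T φ → φ 0 = ω →
      (∀ t ∈ Icc (0 : ℝ) T, φ t ∈ P ∪ {φ T}) →
      φ T ∈ P ∧ ∃ S > 0, ∃ ψ : ℝ → (Fin n → ℝ), IsSol f S ψ ∧ ψ 0 = φ T ∧
        ∀ s ∈ Icc (0 : ℝ) S, ψ s ∈ P) :
    StaysIn f P ω := by
  intro T _ φ hφ hφ0
  refine Icc_subset_of_forall_Ico_subset (s := φ ⁻¹' P) fun x hx hPx => ?_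
  have hupto : ∀ t ∈ Icc 0 x, φ t ∈ P ∪ {φ x} := fun t ht =>
    ht.2.lt_or_eq.elim (fun htx => .inl (hPx ⟨ht.1, htx⟩)) fun htx => .inr (htx ▸ rfl)
  obtain ⟨hxP, S, hS, ψ, hψ, hψ0, hψP⟩ := h x hx.1 φ (hφ.mono hx.2) hφ0 hupto
  refine ⟨hxP, fun hxT => ⟨x + min S (T - x), by simp [hS, hxT], fun u hu => ?_⟩⟩
  have hagree : EqOn ψ (fun s => φ (x + s)) (Icc 0 (min S (T - x))) :=
    (hψ.mono (min_le_left _ _)).eqOn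
      (hφ.comp_const_add hx.1 (by linarith [min_le_right S (T - x)])) (by simp [hψ0])
  have hux : u - x ∈ Icc 0 (min S (T - x)) := ⟨by linarith [hu.1], by linarith [hu.2]⟩
  simpa [hagree hux] using hψP (u - x) ⟨hux.1, hux.2.trans (min_le_left _ _)⟩
end

theorem realInd_ODE_sound_general {n : ℕ} (f : Fin n → MvPolynomial (Fin n) ℝ)
    (hF : ∀ x : Fin n → ℝ, (fun i => eval x (f i)) ≠ (0 : Fin n → ℝ))
    (P : Set (Fin n → ℝ)) (ω : Fin n → ℝ) :
    (∀ T : ℝ, 0 ≤ T → ∀ φ : ℝ → (Fin n → ℝ), IsSol f T φ → φ 0 = ω →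
        ∀ t ∈ Icc (0 : ℝ) T, φ t ∈ P)
    ↔ (∀ T : ℝ, 0 ≤ T → ∀ φ : ℝ → (Fin n → ℝ), IsSol f T φ → φ 0 = ω →
        (∀ t ∈ Icc (0 : ℝ) T, φ t ∈ P ∪ {φ T}) →
        φ T ∈ P ∧ ∃ S : ℝ, 0 < S ∧ ∃ ψ : ℝ → (Fin n → ℝ), IsSol f S ψ ∧
          ψ 0 = φ T ∧ (∀ s ∈ Icc (0 : ℝ) S, ψ s ∈ P) ∧ ψ S ≠ φ T) := by
  constructor
  · intro hω T hT φ hφ hφ0 _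
    have hφT : StaysIn f P (φ T) := StaysIn.of_isSol hω hT hφ hφ0
    obtain ⟨S, hS, ψ, hψ, hψ0, hψS⟩ := exists_isSol_ne hF (φ T)
    exact ⟨hω T hT φ hφ hφ0 T ⟨hT, le_rfl⟩, S, hS, ψ, hψ, hψ0, hφT S hS.le ψ hψ hψ0, hψS⟩
  · intro h
    refine staysIn_of_forall_exists_isSol_mem fun T hT φ hφ hφ0 hP => ?_
    obtain ⟨hφT, S, hS, ψ, hψ, hψ0, hψP, -⟩ := h T hT φ hφ hφ0 hP
    exact ⟨hφT, S, hS, ψ, hψ, hψ0, hψP⟩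

/-- Soundness of the real induction axiom for ODEs (RI). -/
theorem realInd_ODE_sound {n : ℕ} (hn : 1 ≤ n) (f : Fin n → MvPolynomial (Fin n) ℝ)
    (hF : ∀ x : Fin n → ℝ, (fun i => eval x (f i)) ≠ (0 : Fin n → ℝ))
    (P : Set (Fin n → ℝ)) (ω : Fin n → ℝ) :
    (∀ T : ℝ, 0 ≤ T → ∀ φ : ℝ → (Fin n → ℝ), IsSol f T φ → φ 0 = ω →
        ∀ t ∈ Icc (0 : ℝ) T, φ t ∈ P)
    ↔ (∀ T : ℝ, 0 ≤ T → ∀ φ : ℝ → (Fin n → ℝ), IsSol f T φ → φ 0 = ω →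
        (∀ t ∈ Icc (0 : ℝ) T, φ t ∈ P ∪ {φ T}) →
        φ T ∈ P ∧ ∃ S : ℝ, 0 < S ∧ ∃ ψ : ℝ → (Fin n → ℝ), IsSol f S ψ ∧
          ψ 0 = φ T ∧ (∀ s ∈ Icc (0 : ℝ) S, ψ s ∈ P) ∧ ψ S ≠ φ T) :=
  realInd_ODE_sound_general f hF P ω
end
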